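/- Let A_m : H ⇉ H be σ_m-comonotone with σ_m ≤ 0, and define G on H^{m−1} by G(x) = K(x) + N_{D}(x), where D = {(x,…,x) ∈ H^{m−1}}, N_D is the normal cone to D, and K(x) = {(v/(m−1),…,v/(m−1)) : v ∈ A_m(x₁)} if x = (x₁,…,x₁) ∈ D and K(x) = ∅ otherwise. Then G is (m−1)σ_m-comonotone. -/

import Mathlib

open Pointwise

open InnerProductSpace

def SigmaComonotone {E : Type*} [NormedAddCommGroup E] [InnerProductSpace ℝ E]
    (A : E → Set E) (σ : ℝ) : Prop :=
  ∀ x y u v, u ∈ A x → v ∈ A y → σ * ‖u - v‖ ^ 2 ≤ ⟪x - y, u - v⟫_ℝ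

/-!
Write `x ∈ H^(m-1)` on the diagonal as `(x₁, …, x₁)`. The inner product of a diagonal vector with
any `u` only sees the sum `∑ i, uᵢ`, and an element of `G x` sums to an element of `A_m x₁` (the
normal-cone part sums to zero). Comonotonicity of `A_m` therefore gives
`σ_m ‖∑ (uᵢ - vᵢ)‖² ≤ ⟪x - y, u - v⟫`, and since `σ_m ≤ 0`, Cauchy–Schwarz in the form
`‖∑ (uᵢ - vᵢ)‖² ≤ (m - 1) ‖u - v‖²` turns the left-hand side into `(m - 1) σ_m ‖u - v‖²`.
-/

open Finset

namespace PiLp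

variable {ι H : Type*} [Fintype ι]

theorem norm_sum_sq_le_card_mul_norm_sq [NormedAddCommGroup H] (u : PiLp 2 (fun _ : ι => H)) :
    ‖∑ i, u i‖ ^ 2 ≤ Fintype.card ι * ‖u‖ ^ 2 := by
  rw [PiLp.norm_sq_eq_of_L2, ← card_univ]
  calc ‖∑ i, u i‖ ^ 2 ≤ (∑ i, ‖u i‖) ^ 2 := by gcongr; exact norm_sum_le _ _
    _ ≤ _ := sq_sum_le_card_mul_sum_sq

theorem inner_eq_inner_sum_of_forall_eq [NormedAddCommGroup H] [InnerProductSpace ℝ H]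
    {x : PiLp 2 (fun _ : ι => H)} {c : H} (hx : ∀ i, x i = c) (u : PiLp 2 (fun _ : ι => H)) :
    ⟪x, u⟫_ℝ = ⟪c, ∑ i, u i⟫_ℝ := by
  simp only [PiLp.inner_apply, hx, inner_sum]

end PiLp

section DiagonalLift

variable {ι H : Type*} [Fintype ι] [NormedAddCommGroup H] [InnerProductSpace ℝ H]

theorem SigmaComonotone.of_forall_mem_of_sum_mem {A : H → Set H} {σ : ℝ} (hσ : σ ≤ 0)
    (hA : SigmaComonotone A σ) (i₀ : ι)
    {B : PiLp 2 (fun _ : ι => H) → Set (PiLp 2 (fun _ : ι => H))}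
    (hB : ∀ x u, u ∈ B x → (∀ i, x i = x i₀) ∧ ∑ i, u i ∈ A (x i₀)) :
    SigmaComonotone B (Fintype.card ι * σ) := by
  intro x y u v hu hv
  obtain ⟨hx, hu⟩ := hB x u hu
  obtain ⟨hy, hv⟩ := hB y v hv
  have hsum : ∑ i, (u - v) i = ∑ i, u i - ∑ i, v i := by
    simp only [PiLp.sub_apply, sum_sub_distrib]
  have hxy : ∀ i, (x - y) i = x i₀ - y i₀ := fun i => by simp only [PiLp.sub_apply, hx i, hy i]
  calc Fintype.card ι * σ * ‖u - v‖ ^ 2 = σ * (Fintype.card ι * ‖u - v‖ ^ 2) := by ring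
    _ ≤ σ * ‖∑ i, u i - ∑ i, v i‖ ^ 2 := by
      rw [← hsum]
      exact mul_le_mul_of_nonpos_left (PiLp.norm_sum_sq_le_card_mul_norm_sq _) hσ
    _ ≤ ⟪x i₀ - y i₀, ∑ i, u i - ∑ i, v i⟫_ℝ := hA _ _ _ _ hu hv
    _ = ⟪x - y, u - v⟫_ℝ := by rw [PiLp.inner_eq_inner_sum_of_forall_eq hxy, hsum]

/-- The operator `G = K + N_D` on `H^ι`, with `K` read off the coordinate `i₀`. -/
def diagonalLift (A : H → Set H) (i₀ : ι) (x : PiLp 2 (fun _ : ι => H)) :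
    Set (PiLp 2 (fun _ : ι => H)) :=
  {u | (∀ i j, x i = x j) ∧ ∃ v ∈ A (x i₀), ∀ i, u i = (Fintype.card ι : ℝ)⁻¹ • v}
    + {w | (∀ i j, x i = x j) ∧ ∑ i, w i = 0}

theorem sum_mem_of_mem_diagonalLift {A : H → Set H} (i₀ : ι) {x u : PiLp 2 (fun _ : ι => H)}
    (hu : u ∈ diagonalLift A i₀ x) : (∀ i, x i = x i₀) ∧ ∑ i, u i ∈ A (x i₀) := by
  obtain ⟨k, ⟨hx, v, hv, hk⟩, w, ⟨-, hw⟩, rfl⟩ := hu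
  have hcard : (Fintype.card ι : ℝ) ≠ 0 := Nat.cast_ne_zero.mpr (Fintype.card_pos_iff.mpr ⟨i₀⟩).ne'
  have hsum : ∑ i, (k + w) i = v := by
    simp [PiLp.add_apply, sum_add_distrib, hk, hw, ← Nat.cast_smul_eq_nsmul ℝ, smul_smul, hcard]
  exact ⟨fun i => hx i i₀, hsum ▸ hv⟩

end DiagonalLift

theorem stmt8 {H : Type*} [NormedAddCommGroup H] [InnerProductSpace ℝ H]
    (m : ℕ) (hm : 2 ≤ m) (Am : H → Set H) (σm : ℝ) (hσm : σm ≤ 0)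
    (hAm : SigmaComonotone Am σm) :
    SigmaComonotone
      (fun x : PiLp 2 (fun _ : Fin (m - 1) => H) =>
        ({u : PiLp 2 (fun _ : Fin (m - 1) => H) |
            (∀ i j, x i = x j) ∧
              ∃ v ∈ Am (x ⟨0, by omega⟩), ∀ i, u i = ((m : ℝ) - 1)⁻¹ • v} : Set _)
          + {w : PiLp 2 (fun _ : Fin (m - 1) => H) |
              (∀ i j, x i = x j) ∧ ∑ i, w i = 0})
      (((m : ℝ) - 1) * σm) := by
  have hcard : (Fintype.card (Fin (m - 1)) : ℝ) = (m : ℝ) - 1 := by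
    rw [Fintype.card_fin, Nat.cast_sub (by omega), Nat.cast_one]
  rw [← hcard]
  exact hAm.of_forall_mem_of_sum_mem hσm ⟨0, by omega⟩ fun _ _ => sum_mem_of_mem_diagonalLift _
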